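/- arXiv:1601.05070 — 6 statements merged into one kernel-verified Lean document; each statement's English description precedes it below -/
import Mathlib

section
/- The number of northeastern lattice paths of length n starting at (0,0) that stay weakly below the diagonal y = x (with arbitrary endpoint at level n) equals binomial(n, floor(n/2)). -/
/-!
Only the gap `x - y` of a point matters: along a path it performs a `±1` walk that must stay
nonnegative. Splitting off the first step, the number `W n k` of such walks of length `n` from
gap `k ≥ 0` satisfies `W (n + 1) k = W n (k + 1) + W n (k - 1)`, with `W n k = 0` for `k < 0`
and `W 0 k = 1`. By Pascal's rule the sum of `C(n, j)` over `-k ≤ n - 2j ≤ k + 1` obeys the same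
recursion (this window is what the reflection principle predicts), and for `k = 0` it is the
single term `C(n, n / 2)`.
-/

open Finset Matrix

def belowDiagonalPaths (n : ℕ) (x : ℕ × ℕ) : Set (Fin (n + 1) → ℕ × ℕ) :=
  {p | p 0 = x ∧
    (∀ i : Fin n, p i.succ = p i.castSucc + (1, 0) ∨ p i.succ = p i.castSucc + (0, 1)) ∧
    ∀ j, (p j).2 ≤ (p j).1}

theorem vecCons_mem_belowDiagonalPaths {n : ℕ} {x y : ℕ × ℕ} {q : Fin (n + 1) → ℕ × ℕ} :
    vecCons y q ∈ belowDiagonalPaths (n + 1) x ↔ y = x ∧ x.2 ≤ x.1 ∧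
      (q ∈ belowDiagonalPaths n (x + (1, 0)) ∨ q ∈ belowDiagonalPaths n (x + (0, 1))) := by
  simp only [belowDiagonalPaths, Set.mem_ofPred_eq, Fin.forall_fin_succ, cons_val_zero,
    cons_val_succ, Fin.castSucc_zero, ← Fin.succ_castSucc]
  constructor
  · rintro ⟨rfl, ⟨h0, hsteps⟩, hy, hq⟩
    exact ⟨rfl, hy, h0.imp (fun h => ⟨h, hsteps, hq⟩) (fun h => ⟨h, hsteps, hq⟩)⟩
  · rintro ⟨rfl, hy, ⟨h0, hsteps, hq⟩ | ⟨h0, hsteps, hq⟩⟩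
    · exact ⟨rfl, ⟨Or.inl h0, hsteps⟩, hy, hq⟩
    · exact ⟨rfl, ⟨Or.inr h0, hsteps⟩, hy, hq⟩

theorem belowDiagonalPaths_eq_empty {n : ℕ} {x : ℕ × ℕ} (hx : x.1 < x.2) :
    belowDiagonalPaths n x = ∅ :=
  Set.eq_empty_of_forall_notMem fun _ ⟨h0, _, hdiag⟩ => by
    have := hdiag 0
    rw [h0] at this
    omega

theorem belowDiagonalPaths_zero {x : ℕ × ℕ} (hx : x.2 ≤ x.1) :
    belowDiagonalPaths 0 x = {fun _ => x} := by
  ext p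
  simp only [belowDiagonalPaths, Set.mem_ofPred_eq, Set.mem_singleton_iff, IsEmpty.forall_iff,
    true_and]
  constructor
  · rintro ⟨h0, -⟩
    exact funext fun j => by rw [Fin.fin_one_eq_zero j, h0]
  · rintro rfl
    exact ⟨rfl, fun _ => hx⟩

theorem belowDiagonalPaths_succ {n : ℕ} {x : ℕ × ℕ} (hx : x.2 ≤ x.1) :
    belowDiagonalPaths (n + 1) x =
      vecCons x '' belowDiagonalPaths n (x + (1, 0)) ∪
        vecCons x '' belowDiagonalPaths n (x + (0, 1)) := by
  ext p
  rw [← cons_head_tail p]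
  simp only [vecCons_mem_belowDiagonalPaths, Set.mem_union, Set.mem_image, vecCons_inj]
  aesop

theorem disjoint_vecCons_image_belowDiagonalPaths (n : ℕ) (x : ℕ × ℕ) :
    Disjoint (vecCons x '' belowDiagonalPaths n (x + (1, 0)))
      (vecCons x '' belowDiagonalPaths n (x + (0, 1))) := by
  rw [Set.disjoint_left]
  rintro _ ⟨q, ⟨hq, -⟩, rfl⟩ ⟨q', ⟨hq', -⟩, hqq'⟩
  rw [vecCons_inj] at hqq'
  rw [hqq'.2, hq] at hq'
  simp [Prod.ext_iff] at hq'

theorem sum_filter_choose_succ (P : ℕ → Prop) [DecidablePred P] (n : ℕ) :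
    ∑ j ∈ range (n + 1 + 1) with P j, (n + 1).choose j =
      ∑ j ∈ range (n + 1) with P j, n.choose j +
        ∑ j ∈ range (n + 1) with P (j + 1), n.choose j := by
  simp only [sum_filter]
  rw [sum_range_succ', sum_range_succ, sum_range_succ' _ n, sum_range_succ _ n]
  simp only [Nat.choose_succ_succ', ite_add_zero, sum_add_distrib, Nat.choose_succ_self,
    Nat.choose_self, Nat.choose_zero_right, add_zero]
  omega

def binomWindow (n : ℕ) (k : ℤ) : ℕ :=
  ∑ j ∈ (range (n + 1)).filter (fun j : ℕ => -k ≤ n - 2 * (j : ℤ) ∧ n - 2 * (j : ℤ) ≤ k + 1),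
    n.choose j

theorem binomWindow_of_neg (n : ℕ) {k : ℤ} (hk : k < 0) : binomWindow n k = 0 :=
  sum_eq_zero fun j hj => by
    simp only [mem_filter] at hj
    omega

theorem binomWindow_zero_left {k : ℤ} (hk : 0 ≤ k) : binomWindow 0 k = 1 := by
  rw [binomWindow, range_one, filter_singleton, if_pos (by omega), sum_singleton, Nat.choose_self]

theorem binomWindow_zero_right (n : ℕ) : binomWindow n 0 = n.choose (n / 2) := by
  have hwindow : (range (n + 1)).filter (fun j : ℕ => -0 ≤ n - 2 * (j : ℤ) ∧ n - 2 * (j : ℤ) ≤ 0 + 1) =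
      {n / 2} := by
    ext j
    simp only [mem_filter, mem_range, mem_singleton]
    omega
  rw [binomWindow, hwindow, sum_singleton]

theorem binomWindow_succ_left (n : ℕ) {k : ℤ} (hk : 0 ≤ k) :
    binomWindow (n + 1) k = binomWindow n (k + 1) + binomWindow n (k - 1) := by
  rw [binomWindow, sum_filter_choose_succ]
  simp only [binomWindow, sum_filter, ← sum_add_distrib]
  refine sum_congr rfl fun j _ => ?_
  push_cast
  split_ifs <;> omega

theorem encard_belowDiagonalPaths (n : ℕ) (x : ℕ × ℕ) :
    (belowDiagonalPaths n x).encard = binomWindow n (x.1 - x.2 : ℤ) := by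
  induction n generalizing x with
  | zero =>
    rcases le_or_gt x.2 x.1 with hx | hx
    · rw [belowDiagonalPaths_zero hx, Set.encard_singleton, binomWindow_zero_left (by omega)]
      rfl
    · rw [belowDiagonalPaths_eq_empty hx, Set.encard_empty, binomWindow_of_neg 0 (by omega)]
      rfl
  | succ n ih =>
    rcases le_or_gt x.2 x.1 with hx | hx
    · have hcons : Function.Injective (vecCons x : (Fin (n + 1) → ℕ × ℕ) → _) :=
        fun _ _ h => (vecCons_inj.mp h).2
      rw [belowDiagonalPaths_succ hx,
        Set.encard_union_eq (disjoint_vecCons_image_belowDiagonalPaths n x),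
        hcons.encard_image, hcons.encard_image, ih, ih,
        binomWindow_succ_left n (by omega)]
      simp only [Prod.fst_add, Prod.snd_add]
      push_cast
      ring_nf
    · rw [belowDiagonalPaths_eq_empty hx, Set.encard_empty, binomWindow_of_neg _ (by omega)]
      rfl

/-- The number of northeastern lattice paths of length `n` starting at `(0,0)` that stay
weakly below the diagonal `y = x` equals `n.choose (n / 2)`. -/
theorem numPaths_length_below_diagonal (n : ℕ) :
    Nat.card {p : Fin (n + 1) → ℕ × ℕ //
      p 0 = (0, 0) ∧
      (∀ i : Fin n, p i.succ = p i.castSucc + (1, 0) ∨ p i.succ = p i.castSucc + (0, 1)) ∧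
      (∀ j, (p j).2 ≤ (p j).1)} = n.choose (n / 2) := by
  change Nat.card (belowDiagonalPaths n (0, 0)) = _
  rw [Nat.card_coe_set_eq, Set.ncard_def, encard_belowDiagonalPaths]
  simpa using binomWindow_zero_right n
end

section
/- Let E*_n = {(a,b) in N^2 : 1 <= a+b <= n} with the componentwise order. For n >= 3, the number of n-element chains in E*_n that are mono-signed (all elements have signature a-b >= 0, or all elements have signature a-b <= 0) equals 2 * binomial(n, floor(n/2)). -/
/-!
The sums `p.1 + p.2` are strictly increasing along a chain of `ℕ × ℕ`, so an `n`-chain of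
`E*_n` has exactly one point of each sum `1, …, n`: consecutive points differ by a unit step,
and the chain is the set of points visited by a lattice path of `n` unit steps from the origin.
It is mono-signed exactly when the path stays weakly on one side of the diagonal, and it cannot
stay on both since its first step leaves the diagonal.

Among the paths of length `n` below the diagonal, those with at most `m ≤ n / 2` vertical steps
number `n.choose m`: removing the last step gives Pascal's rule. For `m = n / 2` these are all
of them.
-/

open Finset

namespace LatticePath

def step (b : Bool) : ℕ × ℕ := if b then (1, 0) else (0, 1)

@[simp] lemma step_true : step true = (1, 0) := rfl

@[simp] lemma step_false : step false = (0, 1) := rfl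

def endpoint (l : List Bool) : ℕ × ℕ := (l.map step).sum

@[simp] lemma endpoint_nil : endpoint [] = 0 := rfl

@[simp] lemma endpoint_cons (b : Bool) (l : List Bool) :
    endpoint (b :: l) = step b + endpoint l := by
  simp [endpoint]

lemma endpoint_fst_add_snd (l : List Bool) : (endpoint l).1 + (endpoint l).2 = l.length := by
  induction l with
  | nil => rfl
  | cons b l ih =>
    cases b <;> simp only [endpoint_cons, step_true, step_false, Prod.fst_add, Prod.snd_add,
      List.length_cons] <;> omega

lemma endpoint_map_not (l : List Bool) : endpoint (l.map not) = (endpoint l).swap := by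
  induction l with
  | nil => rfl
  | cons b l ih => cases b <;> simp [ih]

lemma step_injective : Function.Injective step := by
  decide

lemma exists_step_eq_add {p q : ℕ × ℕ} (hpq : p ≤ q) (hs : q.1 + q.2 = p.1 + p.2 + 1) :
    ∃ b, q = step b + p := by
  obtain ⟨h1, h2⟩ := hpq
  rcases Nat.lt_or_ge p.1 q.1 with h | h
  · exact ⟨true, Prod.ext (by simp only [step_true, Prod.fst_add]; omega)
      (by simp only [step_true, Prod.snd_add]; omega)⟩
  · exact ⟨false, Prod.ext (by simp only [step_false, Prod.fst_add]; omega)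
      (by simp only [step_false, Prod.snd_add]; omega)⟩

/-- The points visited by the path, the origin excluded; the head of the list is the last step. -/
def pathChain : List Bool → Finset (ℕ × ℕ)
  | [] => ∅
  | b :: l => insert (endpoint (b :: l)) (pathChain l)

@[simp] lemma pathChain_nil : pathChain [] = ∅ := rfl

lemma pathChain_cons (b : Bool) (l : List Bool) :
    pathChain (b :: l) = insert (endpoint (b :: l)) (pathChain l) := rfl

lemma le_endpoint_of_mem_pathChain {l : List Bool} {p : ℕ × ℕ} (hp : p ∈ pathChain l) :
    p ≤ endpoint l := by
  induction l with
  | nil => simp at hp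
  | cons b l ih =>
    rcases mem_insert.1 hp with rfl | hp
    · exact le_rfl
    · exact (ih hp).trans (by simp)

lemma endpoint_mem_pathChain {l : List Bool} (hl : l ≠ []) : endpoint l ∈ pathChain l := by
  cases l with
  | nil => exact absurd rfl hl
  | cons b l => exact mem_insert_self _ _

lemma fst_add_snd_mem_Icc_of_mem_pathChain {l : List Bool} {p : ℕ × ℕ}
    (hp : p ∈ pathChain l) : p.1 + p.2 ∈ Icc 1 l.length := by
  induction l with
  | nil => simp at hp
  | cons b l ih =>
    rcases mem_insert.1 hp with rfl | hp
    · have := endpoint_fst_add_snd l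
      cases b <;> simp only [endpoint_cons, step_true, step_false, Prod.fst_add, Prod.snd_add,
        List.length_cons, mem_Icc] <;> omega
    · have := mem_Icc.1 (ih hp)
      simp only [List.length_cons, mem_Icc]
      omega

lemma endpoint_cons_notMem_pathChain (b : Bool) (l : List Bool) :
    endpoint (b :: l) ∉ pathChain l := fun h => by
  have := mem_Icc.1 (fst_add_snd_mem_Icc_of_mem_pathChain h)
  have := endpoint_fst_add_snd (b :: l)
  simp only [List.length_cons] at this
  omega

lemma card_pathChain (l : List Bool) : #(pathChain l) = l.length := by
  induction l with
  | nil => rfl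
  | cons b l ih =>
    rw [pathChain_cons, card_insert_of_notMem (endpoint_cons_notMem_pathChain b l), ih,
      List.length_cons]

lemma isChain_pathChain (l : List Bool) : IsChain (· ≤ ·) (pathChain l : Set (ℕ × ℕ)) := by
  induction l with
  | nil => simp
  | cons b l ih =>
    rw [pathChain_cons, coe_insert]
    refine ih.insert fun q hq _ => Or.inr ((le_endpoint_of_mem_pathChain hq).trans ?_)
    simp

lemma eq_of_pathChain_eq {l₁ l₂ : List Bool} (hlen : l₁.length = l₂.length)
    (h : pathChain l₁ = pathChain l₂) : l₁ = l₂ := by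
  induction l₁ generalizing l₂ with
  | nil => exact (List.length_eq_zero_iff.1 hlen.symm).symm
  | cons b t ih =>
    obtain _ | ⟨c, s⟩ := l₂
    · simp at hlen
    have hlen' : t.length = s.length := by simpa using hlen
    have htop : endpoint (b :: t) = endpoint (c :: s) := by
      have hmem := h ▸ endpoint_mem_pathChain (List.cons_ne_nil b t)
      refine (mem_insert.1 hmem).resolve_right fun hs => ?_
      have := mem_Icc.1 (fst_add_snd_mem_Icc_of_mem_pathChain hs)
      have := endpoint_fst_add_snd (b :: t)
      simp only [List.length_cons] at this
      omega
    have hts : t = s := ih hlen' <| by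
      rw [← erase_insert (endpoint_cons_notMem_pathChain b t),
        ← erase_insert (endpoint_cons_notMem_pathChain c s), ← pathChain_cons, ← pathChain_cons,
        h, htop]
    subst hts
    rw [endpoint_cons, endpoint_cons, add_left_inj] at htop
    rw [step_injective htop]

/-- An `n`-chain of `E*_n`. -/
def IsFullChain (n : ℕ) (S : Finset (ℕ × ℕ)) : Prop :=
  #S = n ∧ (∀ p ∈ S, 1 ≤ p.1 + p.2 ∧ p.1 + p.2 ≤ n) ∧ IsChain (· ≤ ·) (S : Set (ℕ × ℕ))

lemma isFullChain_pathChain (l : List Bool) : IsFullChain l.length (pathChain l) :=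
  ⟨card_pathChain l, fun _ hp => mem_Icc.1 (fst_add_snd_mem_Icc_of_mem_pathChain hp),
    isChain_pathChain l⟩

lemma eq_of_le_of_fst_add_snd_eq {p q : ℕ × ℕ} (hpq : p ≤ q) (hs : p.1 + p.2 = q.1 + q.2) :
    p = q := by
  obtain ⟨h1, h2⟩ := hpq
  exact Prod.ext (by omega) (by omega)

lemma _root_.IsChain.injOn_fst_add_snd {S : Set (ℕ × ℕ)} (hS : IsChain (· ≤ ·) S) :
    S.InjOn fun p => p.1 + p.2 := fun p hp q hq hs => by
  by_contra hne
  rcases hS hp hq hne with h | h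
  · exact hne (eq_of_le_of_fst_add_snd_eq h hs)
  · exact hne (eq_of_le_of_fst_add_snd_eq h hs.symm).symm

lemma IsFullChain.exists_fst_add_snd_eq {n : ℕ} {S : Finset (ℕ × ℕ)} (hS : IsFullChain n S)
    (hn : 1 ≤ n) : ∃ q ∈ S, q.1 + q.2 = n := by
  obtain ⟨hcard, hsum, hchain⟩ := hS
  obtain ⟨q, hq, hqn⟩ := surj_on_of_inj_on_of_card_le (t := Icc 1 n) (fun p _ => p.1 + p.2)
    (fun p hp => mem_Icc.2 (hsum p hp)) (fun _ _ hp hq => hchain.injOn_fst_add_snd hp hq)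
    (by simp [hcard]) n (by simp [hn])
  exact ⟨q, hq, hqn.symm⟩

lemma IsFullChain.erase {n : ℕ} {S : Finset (ℕ × ℕ)} (hS : IsFullChain (n + 1) S)
    {q : ℕ × ℕ} (hq : q ∈ S) (hqn : q.1 + q.2 = n + 1) : IsFullChain n (S.erase q) := by
  obtain ⟨hcard, hsum, hchain⟩ := hS
  refine ⟨by simp [card_erase_of_mem hq, hcard], fun p hp => ?_,
    hchain.mono (by simp)⟩
  obtain ⟨hpq, hp⟩ := mem_erase.1 hp
  have hpn : p.1 + p.2 ≠ n + 1 := fun h => hpq (hchain.injOn_fst_add_snd hp hq (h.trans hqn.symm))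
  have := hsum p hp
  omega

lemma IsFullChain.exists_pathChain_eq {n : ℕ} {S : Finset (ℕ × ℕ)} (hS : IsFullChain n S) :
    ∃ l : List Bool, l.length = n ∧ pathChain l = S := by
  induction n generalizing S with
  | zero => exact ⟨[], rfl, (card_eq_zero.1 hS.1).symm⟩
  | succ n ih =>
    obtain ⟨q, hq, hqn⟩ := hS.exists_fst_add_snd_eq n.succ_pos
    obtain ⟨l, rfl, hl⟩ := ih (hS.erase hq hqn)
    have hle : endpoint l ≤ q := by
      rcases eq_or_ne l [] with rfl | hne
      · exact zero_le
      have hmem : endpoint l ∈ S := mem_of_mem_erase (hl ▸ endpoint_mem_pathChain hne)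
      have := endpoint_fst_add_snd l
      refine (hS.2.2.total hmem hq).resolve_right fun hql => ?_
      obtain ⟨h1, h2⟩ := hql
      omega
    obtain ⟨b, rfl⟩ := exists_step_eq_add hle (by rw [endpoint_fst_add_snd, hqn])
    exact ⟨b :: l, rfl, by rw [pathChain_cons, endpoint_cons, hl, insert_erase hq]⟩

lemma isFullChain_iff {n : ℕ} {S : Finset (ℕ × ℕ)} :
    IsFullChain n S ↔ ∃ l : List Bool, l.length = n ∧ pathChain l = S :=
  ⟨IsFullChain.exists_pathChain_eq, by rintro ⟨l, rfl, rfl⟩; exact isFullChain_pathChain l⟩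

def words : ℕ → Finset (List Bool)
  | 0 => {[]}
  | n + 1 => (words n).map ⟨List.cons true, List.cons_injective⟩ ∪
      (words n).map ⟨List.cons false, List.cons_injective⟩

@[simp] lemma mem_words {n : ℕ} {l : List Bool} : l ∈ words n ↔ l.length = n := by
  induction n generalizing l with
  | zero => simp [words]
  | succ n ih => cases l with
    | nil => simp [words]
    | cons b l => cases b <;> simp [words, ih]

lemma card_filter_words_succ (n : ℕ) (P : List Bool → Prop) [DecidablePred P] :
    #{l ∈ words (n + 1) | P l} =
      #{l ∈ words n | P (true :: l)} + #{l ∈ words n | P (false :: l)} := by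
  rw [words, filter_union, card_union_of_disjoint, filter_map, filter_map, card_map, card_map]
  · rfl
  · exact disjoint_filter_filter (disjoint_left.2 (by simp))

lemma card_filter_words_map_not (n : ℕ) (P : List Bool → Prop) [DecidablePred P] :
    #{l ∈ words n | P (l.map not)} = #{l ∈ words n | P l} := by
  have hnot (l : List Bool) : (l.map not).map not = l := by simp [Function.comp_def]
  exact card_nbij' (List.map not) (List.map not) (fun l => by simp) (fun l => by simp [hnot])
    (fun l _ => hnot l) (fun l _ => hnot l)

def IsBallot (l : List Bool) : Prop := ∀ p ∈ pathChain l, p.2 ≤ p.1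

instance : DecidablePred IsBallot := fun l =>
  inferInstanceAs (Decidable (∀ p ∈ pathChain l, p.2 ≤ p.1))

lemma IsBallot.endpoint_snd_le_fst {l : List Bool} (hl : IsBallot l) :
    (endpoint l).2 ≤ (endpoint l).1 := by
  rcases eq_or_ne l [] with rfl | hne
  · simp
  · exact hl _ (endpoint_mem_pathChain hne)

lemma isBallot_cons {b : Bool} {l : List Bool} :
    IsBallot (b :: l) ↔ (endpoint (b :: l)).2 ≤ (endpoint (b :: l)).1 ∧ IsBallot l :=
  forall_mem_insert _ _ _

lemma isBallot_cons_true {l : List Bool} : IsBallot (true :: l) ↔ IsBallot l := by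
  refine isBallot_cons.trans ⟨And.right, fun h => ⟨?_, h⟩⟩
  have := h.endpoint_snd_le_fst
  simp only [endpoint_cons, step_true, Prod.fst_add, Prod.snd_add]
  omega

lemma isBallot_cons_false {l : List Bool} :
    IsBallot (false :: l) ↔ (endpoint l).2 < (endpoint l).1 ∧ IsBallot l := by
  simp only [isBallot_cons, endpoint_cons, step_false, Prod.fst_add, Prod.snd_add,
    and_congr_left_iff]
  omega

lemma pathChain_map_not (l : List Bool) :
    pathChain (l.map not) = (pathChain l).image Prod.swap := by
  induction l with
  | nil => rfl
  | cons b l ih =>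
    rw [List.map_cons, pathChain_cons, pathChain_cons, image_insert, ih, ← List.map_cons,
      endpoint_map_not]

lemma isBallot_map_not {l : List Bool} :
    IsBallot (l.map not) ↔ ∀ p ∈ pathChain l, p.1 ≤ p.2 := by
  simp only [IsBallot, pathChain_map_not, forall_mem_image, Prod.fst_swap, Prod.snd_swap]

lemma eq_nil_of_forall_mem_pathChain_fst_eq_snd {l : List Bool}
    (h : ∀ p ∈ pathChain l, p.1 = p.2) : l = [] := by
  induction l with
  | nil => rfl
  | cons b l ih =>
    rw [pathChain_cons, forall_mem_insert] at h
    obtain rfl := ih h.2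
    cases b <;> simp at h

def ballotWords (n m : ℕ) : Finset (List Bool) :=
  {l ∈ words n | IsBallot l ∧ (endpoint l).2 ≤ m}

lemma card_ballotWords_zero (n : ℕ) : #(ballotWords n 0) = 1 := by
  induction n with
  | zero => rfl
  | succ n ih =>
    rw [ballotWords, card_filter_words_succ, ← ih, ballotWords]
    simp [isBallot_cons_true]

lemma card_ballotWords_succ_succ {n m : ℕ} (hm : 2 * (m + 1) ≤ n + 1) :
    #(ballotWords (n + 1) (m + 1)) = #(ballotWords n (m + 1)) + #(ballotWords n m) := by
  rw [ballotWords, card_filter_words_succ, ballotWords, ballotWords]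
  congr 2
  · exact filter_congr fun l _ => by simp [isBallot_cons_true]
  · refine filter_congr fun l hl => ?_
    have := endpoint_fst_add_snd l
    rw [mem_words.1 hl] at this
    simp only [isBallot_cons_false, endpoint_cons, step_false, Prod.snd_add]
    exact ⟨fun h => ⟨h.1.2, by omega⟩, fun h => ⟨⟨by omega, h.1⟩, by omega⟩⟩

lemma ballotWords_eq {n m : ℕ} (h : n ≤ 2 * m + 1) :
    ballotWords n m = {l ∈ words n | IsBallot l} :=
  filter_congr fun l hl => by
    have := endpoint_fst_add_snd l
    rw [mem_words.1 hl] at this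
    exact ⟨And.left, fun hb => ⟨hb, by have := hb.endpoint_snd_le_fst; omega⟩⟩

lemma card_ballotWords {n m : ℕ} (h : 2 * m ≤ n) : #(ballotWords n m) = n.choose m := by
  induction n generalizing m with
  | zero =>
    obtain rfl : m = 0 := by omega
    exact card_ballotWords_zero 0
  | succ n ih =>
    obtain _ | m := m
    · exact card_ballotWords_zero _
    rw [card_ballotWords_succ_succ h, Nat.choose_succ_succ', ih (m := m) (by omega), add_comm]
    rcases Nat.lt_or_ge n (2 * (m + 1)) with hn | hn
    · obtain rfl : n = 2 * m + 1 := by omega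
      rw [ballotWords_eq (by omega), ← ballotWords_eq (m := m) (by omega), ih (by omega),
        Nat.choose_symm_half]
    · rw [ih hn]

lemma card_filter_isBallot (n : ℕ) : #{l ∈ words n | IsBallot l} = n.choose (n / 2) := by
  rw [← ballotWords_eq (m := n / 2) (by omega), card_ballotWords (by omega)]

lemma card_filter_monosigned {n : ℕ} (hn : 1 ≤ n) :
    #{l ∈ words n | IsBallot l ∨ IsBallot (l.map not)} = 2 * n.choose (n / 2) := by
  rw [filter_or, card_union_of_disjoint, card_filter_words_map_not, card_filter_isBallot, two_mul]
  refine disjoint_filter.2 fun l hl hb hb' => ?_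
  have hnil := eq_nil_of_forall_mem_pathChain_fst_eq_snd fun p hp =>
    le_antisymm (isBallot_map_not.1 hb' p hp) (hb p hp)
  rw [mem_words, hnil, List.length_nil] at hl
  omega

lemma natCard_isFullChain_and (n : ℕ) (Q : Finset (ℕ × ℕ) → Prop) [DecidablePred Q] :
    Nat.card {S // IsFullChain n S ∧ Q S} = #{l ∈ words n | Q (pathChain l)} := by
  have hinj : Set.InjOn pathChain (words n : Set (List Bool)) := fun l₁ h₁ l₂ h₂ =>
    eq_of_pathChain_eq (by rw [mem_coe, mem_words] at h₁ h₂; rw [h₁, h₂])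
  calc Nat.card {S // IsFullChain n S ∧ Q S}
      = Nat.card ({l ∈ words n | Q (pathChain l)}.image pathChain) := by
        refine Nat.card_congr (Equiv.subtypeEquivRight fun S => ?_)
        simp only [isFullChain_iff, mem_image, mem_filter, mem_words]
        constructor
        · rintro ⟨⟨l, hl, rfl⟩, hQ⟩
          exact ⟨l, ⟨hl, hQ⟩, rfl⟩
        · rintro ⟨l, ⟨hl, hQ⟩, rfl⟩
          exact ⟨⟨l, hl, rfl⟩, hQ⟩
    _ = #{l ∈ words n | Q (pathChain l)} := by
        rw [Nat.card_eq_finsetCard, card_image_of_injOn (hinj.mono (filter_subset _ _))]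

end LatticePath

open LatticePath in
/-- For `n ≥ 3`, the number of mono-signed `n`-chains in `E*_n` (all elements of
nonnegative signature, or all of nonpositive signature) is `2 * n.choose (n / 2)`. -/
theorem count_monosigned_chains (n : ℕ) (hn : 3 ≤ n) :
    Nat.card {S : Finset (ℕ × ℕ) // S.card = n ∧
      (∀ p ∈ S, 1 ≤ p.1 + p.2 ∧ p.1 + p.2 ≤ n) ∧
      IsChain (· ≤ ·) (S : Set (ℕ × ℕ)) ∧
      ((∀ p ∈ S, p.2 ≤ p.1) ∨ (∀ p ∈ S, p.1 ≤ p.2))} = 2 * n.choose (n / 2) := by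
  have h := natCard_isFullChain_and n fun S => (∀ p ∈ S, p.2 ≤ p.1) ∨ ∀ p ∈ S, p.1 ≤ p.2
  simp only [IsFullChain, and_assoc] at h
  rw [h, ← card_filter_monosigned (by omega)]
  exact congrArg card (filter_congr fun l _ => or_congr Iff.rfl isBallot_map_not.symm)
end

section
/- Let E*_n = {(a,b) in N^2 : 1 <= a+b <= n} with the componentwise order. For n >= 3, the number of bi-signed n-chains in E*_n (chains of cardinality n containing at least one element of positive signature a-b > 0 and at least one element of negative signature a-b < 0) equals 2^n - 2*binomial(n, floor(n/2)). -/
/-!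
Since comparable points of `ℕ × ℕ` of equal rank `a + b` coincide, an `n`-chain in `E*_n` has
exactly one point of each rank `1, …, n`, and consecutive points differ by a unit step. Such chains
are therefore the lattice paths of `n` unit steps from the origin, i.e. Boolean words of length `n`.
A path fails to be bi-signed iff it stays weakly on one side of the diagonal. Swapping the letters
exchanges the two sides, and the paths that never cross above the diagonal and take at most
`m ≤ n / 2` steps in the first coordinate number `n.choose m`, by Pascal's rule applied to the last
step; for `m = n / 2` this counts all of them.
-/

open Finset

namespace LatticePath

variable {n : ℕ}

def letter (w : Fin n → Bool) (i : ℕ) : Bool := if h : i < n then w ⟨i, h⟩ else false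

def ones (w : Fin n → Bool) (k : ℕ) : ℕ := #{i ∈ range k | letter w i}

/-- The lattice path of `w` takes its `i`-th unit step in the first coordinate iff `w i`. -/
def point (w : Fin n → Bool) (k : ℕ) : ℕ × ℕ := (ones w k, k - ones w k)

def toChain (w : Fin n → Bool) : Finset (ℕ × ℕ) := (Icc 1 n).image (point w)

lemma letter_of_lt (w : Fin n → Bool) {i : ℕ} (hi : i < n) : letter w i = w ⟨i, hi⟩ := dif_pos hi

@[simp] lemma ones_zero (w : Fin n → Bool) : ones w 0 = 0 := by simp [ones]

lemma ones_succ (w : Fin n → Bool) (k : ℕ) : ones w (k + 1) = ones w k + (letter w k).toNat := by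
  cases h : letter w k <;> simp [ones, range_add_one, filter_insert, h]

lemma ones_le (w : Fin n → Bool) (k : ℕ) : ones w k ≤ k :=
  (card_filter_le _ _).trans (card_range k).le

lemma point_rank (w : Fin n → Bool) (k : ℕ) : (point w k).1 + (point w k).2 = k := by
  have := ones_le w k
  simp only [point]
  omega

lemma point_injective (w : Fin n → Bool) : Function.Injective (point w) :=
  fun a b h => by rw [← point_rank w a, h, point_rank]

lemma monotone_point (w : Fin n → Bool) : Monotone (point w) := by
  refine monotone_nat_of_le_succ fun k => ?_
  have := Bool.toNat_le (letter w k)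
  have := ones_le w k
  simp only [point, Prod.mk_le_mk, ones_succ]
  omega

lemma card_toChain (w : Fin n → Bool) : #(toChain w) = n := by
  rw [toChain, card_image_of_injective _ (point_injective w), Nat.card_Icc, Nat.add_sub_cancel]

lemma rank_mem_Icc_of_mem_toChain {w : Fin n → Bool} {p : ℕ × ℕ} (hp : p ∈ toChain w) :
    1 ≤ p.1 + p.2 ∧ p.1 + p.2 ≤ n := by
  obtain ⟨k, hk, rfl⟩ := mem_image.1 hp
  rwa [point_rank, ← mem_Icc]

lemma isChain_toChain (w : Fin n → Bool) : IsChain (· ≤ ·) (toChain w : Set (ℕ × ℕ)) := by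
  rw [toChain, coe_image]
  exact (monotone_point w).isChain_image (isChain_of_trichotomous _)

lemma eq_of_ones_eq {w w' : Fin n → Bool} (h : ∀ k ≤ n, ones w k = ones w' k) : w = w' := by
  funext i
  have h1 := ones_succ w i
  have h2 := ones_succ w' i
  rw [h i i.isLt.le, h (i + 1) i.isLt, letter_of_lt _ i.isLt] at h1
  rw [letter_of_lt _ i.isLt] at h2
  cases hw : w i <;> cases hw' : w' i <;> simp_all

lemma toChain_injective : Function.Injective (toChain (n := n)) := by
  refine fun w w' h => eq_of_ones_eq fun k hk => ?_
  rcases k.eq_zero_or_pos with rfl | hk0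
  · simp
  have hmem : point w k ∈ toChain w' := h ▸ mem_image_of_mem _ (mem_Icc.2 ⟨hk0, hk⟩)
  obtain ⟨j, -, hj⟩ := mem_image.1 hmem
  obtain rfl : j = k := by rw [← point_rank w' j, hj, point_rank]
  exact (congrArg Prod.fst hj).symm

lemma exists_point_eq {f : ℕ → ℕ × ℕ} (hrank : ∀ k ≤ n, (f k).1 + (f k).2 = k)
    (hmono : ∀ k < n, f k ≤ f (k + 1)) : ∃ w : Fin n → Bool, ∀ k ≤ n, point w k = f k := by
  obtain ⟨w, hw⟩ : ∃ w : Fin n → Bool, ∀ k ≤ n, ones w k = (f k).1 := by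
    refine ⟨fun i => decide ((f i).1 < (f (i + 1)).1), fun k hk => ?_⟩
    induction k with
    | zero => have := hrank 0 hk; simp only [ones_zero]; omega
    | succ k ih =>
      rw [ones_succ, ih (by omega), letter_of_lt _ (by omega)]
      obtain ⟨h1, h2⟩ := hmono k hk
      have := hrank k (by omega)
      have := hrank (k + 1) hk
      by_cases h : (f k).1 < (f (k + 1)).1 <;> simp [h] <;> omega
  refine ⟨w, fun k hk => Prod.ext (hw k hk) ?_⟩
  have := hrank k hk
  simp only [point, hw k hk]
  omega

lemma eq_of_le_of_rank_eq {p q : ℕ × ℕ} (h : p ≤ q) (hr : p.1 + p.2 = q.1 + q.2) : p = q := by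
  obtain ⟨h1, h2⟩ := h
  exact Prod.ext (by omega) (by omega)

lemma le_of_rank_lt {T : Set (ℕ × ℕ)} (hT : IsChain (· ≤ ·) T) {p q : ℕ × ℕ} (hp : p ∈ T)
    (hq : q ∈ T) (h : p.1 + p.2 < q.1 + q.2) : p ≤ q :=
  (hT.total hp hq).resolve_right fun hqp => (add_le_add hqp.1 hqp.2).not_gt h

lemma exists_rank_eq_of_card_le {S : Finset (ℕ × ℕ)} {T : Finset ℕ}
    (hS : IsChain (· ≤ ·) (S : Set (ℕ × ℕ))) (hrank : ∀ p ∈ S, p.1 + p.2 ∈ T) (hcard : #T ≤ #S) :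
    ∀ k ∈ T, ∃ p ∈ S, p.1 + p.2 = k := by
  refine surjOn_of_injOn_of_card_le (fun p : ℕ × ℕ => p.1 + p.2) hrank
    (fun p hp q hq hpq => ?_) hcard
  by_contra hne
  rcases hS hp hq hne with h | h
  exacts [hne (eq_of_le_of_rank_eq h hpq), hne (eq_of_le_of_rank_eq h hpq.symm).symm]

lemma exists_toChain_eq {S : Finset (ℕ × ℕ)} (hcard : #S = n)
    (hrank : ∀ p ∈ S, 1 ≤ p.1 + p.2 ∧ p.1 + p.2 ≤ n) (hS : IsChain (· ≤ ·) (S : Set (ℕ × ℕ))) :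
    ∃ w : Fin n → Bool, toChain w = S := by
  have h0 : (0, 0) ∉ S := fun h => by simpa using (hrank _ h).1
  have hS₀ : IsChain (· ≤ ·) ((insert (0, 0) S : Finset (ℕ × ℕ)) : Set (ℕ × ℕ)) := by
    rw [coe_insert]
    exact hS.insert fun p _ _ => Or.inl zero_le
  have hrank₀ : ∀ p ∈ insert (0, 0) S, p.1 + p.2 ∈ Iic n := by
    simpa [or_imp, forall_and] using fun a b h => (hrank (a, b) h).2
  choose! f hfS hf using exists_rank_eq_of_card_le hS₀ hrank₀
    (by rw [card_insert_of_notMem h0, hcard, Nat.card_Iic])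
  obtain ⟨w, hw⟩ := exists_point_eq (fun k hk => hf k (mem_Iic.2 hk)) fun k hk =>
    le_of_rank_lt hS₀ (hfS k (mem_Iic.2 hk.le)) (hfS (k + 1) (mem_Iic.2 hk))
      (by rw [hf k (mem_Iic.2 hk.le), hf (k + 1) (mem_Iic.2 hk)]; omega)
  refine ⟨w, eq_of_subset_of_card_le (fun p hp => ?_) (by rw [card_toChain, hcard])⟩
  obtain ⟨k, hk, rfl⟩ := mem_image.1 hp
  obtain ⟨hk1, hkn⟩ := mem_Icc.1 hk
  rw [hw k hkn]
  refine (mem_insert.1 (hfS k (mem_Iic.2 hkn))).resolve_left fun h => ?_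
  have := hf k (mem_Iic.2 hkn)
  rw [h] at this
  omega

-- `2 * ones w k - k` is the signature of `point w k`.
def NoPositive (w : Fin n → Bool) : Prop := ∀ k ≤ n, 2 * ones w k ≤ k

def NoNegative (w : Fin n → Bool) : Prop := ∀ k ≤ n, k ≤ 2 * ones w k

instance : DecidablePred (NoPositive (n := n)) :=
  fun w => inferInstanceAs (Decidable (∀ k ≤ n, 2 * ones w k ≤ k))

instance : DecidablePred (NoNegative (n := n)) :=
  fun w => inferInstanceAs (Decidable (∀ k ≤ n, k ≤ 2 * ones w k))

lemma exists_mem_toChain_pos_iff (w : Fin n → Bool) :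
    (∃ p ∈ toChain w, p.2 < p.1) ↔ ¬NoPositive w := by
  simp only [toChain, exists_mem_image, mem_Icc, NoPositive, not_forall, point]
  constructor
  · rintro ⟨k, ⟨-, hk⟩, h⟩
    exact ⟨k, hk, by omega⟩
  · rintro ⟨k, hk, h⟩
    have := ones_le w k
    exact ⟨k, ⟨by omega, hk⟩, by omega⟩

lemma exists_mem_toChain_neg_iff (w : Fin n → Bool) :
    (∃ p ∈ toChain w, p.1 < p.2) ↔ ¬NoNegative w := by
  simp only [toChain, exists_mem_image, mem_Icc, NoNegative, not_forall, point]
  constructor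
  · rintro ⟨k, ⟨-, hk⟩, h⟩
    exact ⟨k, hk, by omega⟩
  · rintro ⟨k, hk, h⟩
    exact ⟨k, ⟨by omega, hk⟩, by omega⟩

lemma card_filter_fin_succ {α : Type*} [Fintype α] (P : (Fin (n + 1) → α) → Prop)
    [DecidablePred P] : #{w | P w} = ∑ a, #{w : Fin n → α | P (Fin.snoc w a)} := by
  simp only [card_filter]
  rw [← (Fin.snocEquiv fun _ => α).sum_comp, Fintype.sum_prod_type]
  rfl

lemma letter_snoc (w : Fin n → Bool) (b : Bool) {i : ℕ} (hi : i < n) :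
    letter (Fin.snoc w b : Fin (n + 1) → Bool) i = letter w i := by
  rw [letter_of_lt _ hi, letter_of_lt _ (hi.trans n.lt_succ_self)]
  exact Fin.snoc_castSucc (α := fun _ => Bool) b w ⟨i, hi⟩

lemma ones_snoc (w : Fin n → Bool) (b : Bool) {k : ℕ} (hk : k ≤ n) :
    ones (Fin.snoc w b : Fin (n + 1) → Bool) k = ones w k := by
  refine congrArg card (filter_congr fun i hi => ?_)
  rw [letter_snoc w b ((mem_range.1 hi).trans_le hk)]

lemma ones_snoc_last (w : Fin n → Bool) (b : Bool) :
    ones (Fin.snoc w b : Fin (n + 1) → Bool) (n + 1) = ones w n + b.toNat := by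
  rw [ones_succ, ones_snoc w b le_rfl, letter_of_lt _ n.lt_succ_self]
  exact congrArg (ones w n + Bool.toNat ·) (Fin.snoc_last (α := fun _ => Bool) b w)

lemma noPositive_snoc (w : Fin n → Bool) (b : Bool) :
    NoPositive (Fin.snoc w b : Fin (n + 1) → Bool) ↔
      NoPositive w ∧ 2 * (ones w n + b.toNat) ≤ n + 1 := by
  simp only [NoPositive, Nat.le_succ_iff, or_imp, forall_and, forall_eq, ones_snoc_last]
  exact and_congr_left' (forall₂_congr fun k hk => by rw [ones_snoc w b hk])

lemma card_noPositive_ones_le_succ {m : ℕ} (hm : 2 * m ≤ n + 1) :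
    #{w : Fin (n + 1) → Bool | NoPositive w ∧ ones w (n + 1) ≤ m} =
      #{w : Fin n → Bool | NoPositive w ∧ ones w n ≤ m} +
        #{w : Fin n → Bool | NoPositive w ∧ ones w n + 1 ≤ m} := by
  rw [card_filter_fin_succ, Fintype.sum_bool, add_comm]
  simp only [noPositive_snoc, ones_snoc_last, Bool.toNat_true, Bool.toNat_false, add_zero]
  congr 2 <;> refine filter_congr fun w _ => ⟨fun h => ⟨h.1.1, h.2⟩, fun h => ⟨⟨h.1, ?_⟩, h.2⟩⟩ <;>
    · have := h.1 n le_rfl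
      omega

lemma card_noPositive_ones_le_of_half_le {m : ℕ} (hm : n / 2 ≤ m) :
    #{w : Fin n → Bool | NoPositive w ∧ ones w n ≤ m} = #{w : Fin n → Bool | NoPositive w} :=
  congrArg card <| filter_congr fun w _ =>
    and_iff_left_of_imp fun hw => by have := hw n le_rfl; omega

lemma card_noPositive_ones_le {m : ℕ} (hm : 2 * m ≤ n) :
    #{w : Fin n → Bool | NoPositive w ∧ ones w n ≤ m} = n.choose m := by
  induction n generalizing m with
  | zero =>
    obtain rfl : m = 0 := by omega
    rw [filter_true_of_mem fun w _ => ⟨fun k hk => by simp [Nat.le_zero.1 hk], by simp⟩]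
    simp
  | succ n ih =>
    rw [card_noPositive_ones_le_succ (by omega)]
    cases m with
    | zero => rw [ih (by omega)]; simp
    | succ m =>
      simp only [add_le_add_iff_right, ih (m := m) (by omega), Nat.choose_succ_succ', add_comm]
      by_cases hmn : 2 * (m + 1) ≤ n
      · rw [ih hmn]
      · obtain rfl : n = 2 * m + 1 := by omega
        rw [card_noPositive_ones_le_of_half_le (by omega),
          ← card_noPositive_ones_le_of_half_le (m := m) (by omega), ih (by omega),
          Nat.choose_symm_half]

lemma card_noPositive : #{w : Fin n → Bool | NoPositive w} = n.choose (n / 2) := by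
  rw [← card_noPositive_ones_le_of_half_le le_rfl, card_noPositive_ones_le (Nat.mul_div_le n 2)]

lemma ones_not_add_ones (w : Fin n → Bool) {k : ℕ} (hk : k ≤ n) :
    ones (fun i => !w i) k + ones w k = k := by
  have hnot : #{i ∈ range k | letter (fun i => !w i) i} = #{i ∈ range k | ¬letter w i} :=
    congrArg card <| filter_congr fun i hi => by
      simp [letter_of_lt _ ((mem_range.1 hi).trans_le hk)]
  rw [ones, ones, hnot, add_comm, card_filter_add_card_filter_not, card_range]

lemma noNegative_iff_noPositive_not (w : Fin n → Bool) :
    NoNegative w ↔ NoPositive (fun i => !w i) :=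
  forall₂_congr fun k hk => by have := ones_not_add_ones w hk; omega

lemma card_noNegative : #{w : Fin n → Bool | NoNegative w} = n.choose (n / 2) := by
  rw [← card_noPositive]
  have hnot : Function.Involutive fun (w : Fin n → Bool) i => !w i :=
    fun w => funext fun i => Bool.not_not (w i)
  exact card_equiv (hnot.toPerm _) fun w => by simp [noNegative_iff_noPositive_not]

lemma card_bisigned (hn : 1 ≤ n) :
    #{w : Fin n → Bool | ¬NoPositive w ∧ ¬NoNegative w} = 2 ^ n - 2 * n.choose (n / 2) := by
  have hdisj : Disjoint (α := Finset (Fin n → Bool)) {w | NoPositive w} {w | NoNegative w} :=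
    disjoint_filter.2 fun w _ hpos hneg => by have := hpos 1 hn; have := hneg 1 hn; omega
  have hsplit := card_filter_add_card_filter_not (s := (univ : Finset (Fin n → Bool)))
    fun w => NoPositive w ∨ NoNegative w
  simp only [not_or, filter_or, card_union_of_disjoint hdisj, card_noPositive, card_noNegative,
    card_univ, Fintype.card_fun, Fintype.card_bool, Fintype.card_fin] at hsplit
  omega

end LatticePath

open LatticePath in
/-- For `n ≥ 3`, the number of bi-signed `n`-chains in `E*_n` (chains of cardinality `n`
containing an element of positive signature and one of negative signature) is
`2 ^ n - 2 * n.choose (n / 2)`. -/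
theorem count_bisigned_chains (n : ℕ) (hn : 3 ≤ n) :
    Nat.card {S : Finset (ℕ × ℕ) // S.card = n ∧
      (∀ p ∈ S, 1 ≤ p.1 + p.2 ∧ p.1 + p.2 ≤ n) ∧
      IsChain (· ≤ ·) (S : Set (ℕ × ℕ)) ∧
      (∃ p ∈ S, p.2 < p.1) ∧ (∃ p ∈ S, p.1 < p.2)} = 2 ^ n - 2 * n.choose (n / 2) := by
  rw [← card_bisigned (by omega), ← Set.ncard_coe_finset, coe_filter_univ,
    ← Set.ncard_image_of_injective _ toChain_injective, ← Nat.card_coe_set_eq]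
  refine Nat.card_congr (Equiv.subtypeEquivRight fun S => ⟨?_, ?_⟩)
  · rintro ⟨hcard, hrank, hS, hpos, hneg⟩
    obtain ⟨w, rfl⟩ := exists_toChain_eq hcard hrank hS
    exact ⟨w, ⟨(exists_mem_toChain_pos_iff w).1 hpos, (exists_mem_toChain_neg_iff w).1 hneg⟩, rfl⟩
  · rintro ⟨w, ⟨hpos, hneg⟩, rfl⟩
    exact ⟨card_toChain w, fun p => rank_mem_Icc_of_mem_toChain, isChain_toChain w,
      (exists_mem_toChain_pos_iff w).2 hpos, (exists_mem_toChain_neg_iff w).2 hneg⟩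
end

section
/- Let a(n,k,s) denote the number of k-element chains in E*_n all of whose elements have signature at most s, where a(n,k,s) = 0 for s < 0. Then for all n >= 1 and s >= 0: a(n,k,s) = delta_{k,0} + sum over j from 1 to n of sum over t from 0 to j of a(n-j, k-1, s + 2t - j), where delta_{k,0} is 1 if k = 0 and 0 otherwise. -/
/-- `chainA n k s` is the number of `k`-element chains in
`E*_n = {(a,b) : 1 ≤ a+b ≤ n}` all of whose elements have signature `a - b` at most `s`;
it is `0` for `k < 0` or `s < 0`. -/
noncomputable def chainA (n : ℕ) (k s : ℤ) : ℕ :=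
  if k < 0 ∨ s < 0 then 0
  else Nat.card {S : Finset (ℕ × ℕ) // S.card = k.toNat ∧
    (∀ p ∈ S, 1 ≤ p.1 + p.2 ∧ p.1 + p.2 ≤ n) ∧
    IsChain (· ≤ ·) (S : Set (ℕ × ℕ)) ∧
    (∀ p ∈ S, (p.1 : ℤ) - (p.2 : ℤ) ≤ s)}

/-!
A nonempty chain in `E*_n` has a least element `m`, of some level `j ∈ [1, n]` and signature
`j - 2t` with `0 ≤ t ≤ j`. Every other element of the chain lies strictly above `m`, so removing
`m` and translating the rest by `-m` is a bijection onto the chains with one element fewer in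
`E*_{n-j}` whose signatures are at most `s - (j - 2t)`: level and signature are additive.
Summing over `m` gives the recursion.
-/

open Finset

theorem IsChain.exists_isLeast {α : Type*} [PartialOrder α] {S : Finset α}
    (hc : IsChain (· ≤ ·) (S : Set α)) (hS : S.Nonempty) : ∃ m, IsLeast (S : Set α) m := by
  obtain ⟨m, hm⟩ := S.exists_minimal hS
  exact ⟨m, hm.prop, fun p hp => (hc.total hm.prop hp).elim id (hm.le_of_le hp)⟩

open scoped Classical in
theorem Finset.card_eq_sum_card_isLeast {α : Type*} [PartialOrder α] {A : Finset (Finset α)}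
    {E : Finset α} (h : ∀ S ∈ A, ∃ m ∈ E, IsLeast (S : Set α) m) :
    #A = ∑ m ∈ E, #(A.filter fun S : Finset α => IsLeast (S : Set α) m) := by
  calc #A = #(E.biUnion fun m => A.filter (fun S : Finset α => IsLeast (S : Set α) m)) := by
        refine congrArg card (ext fun S => ?_)
        simp only [mem_biUnion, mem_filter]
        exact ⟨fun hS => (h S hS).imp fun m ⟨hm, hl⟩ => ⟨hm, hS, hl⟩,
          fun ⟨_, _, hS, _⟩ => hS⟩
    _ = _ := card_biUnion fun m _ m' _ hne =>
        disjoint_filter.2 fun S _ hm hm' => hne (hm.unique hm')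

namespace EStar

def level (p : ℕ × ℕ) : ℕ := p.1 + p.2

def signature (p : ℕ × ℕ) : ℤ := p.1 - p.2

@[simp] theorem level_add (p q : ℕ × ℕ) : level (p + q) = level p + level q := by
  simp only [level, Prod.fst_add, Prod.snd_add]; ring

@[simp] theorem signature_add (p q : ℕ × ℕ) :
    signature (p + q) = signature p + signature q := by
  simp only [signature, Prod.fst_add, Prod.snd_add]; push_cast; ring

theorem level_pos_iff {p : ℕ × ℕ} : 0 < level p ↔ p ≠ 0 := by
  simp only [level, ne_eq, Prod.ext_iff, Prod.fst_zero, Prod.snd_zero]; omega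

def eStar (n : ℕ) : Finset (ℕ × ℕ) := (Icc 1 n).biUnion antidiagonal

theorem mem_eStar {n : ℕ} {p : ℕ × ℕ} : p ∈ eStar n ↔ 1 ≤ level p ∧ level p ≤ n := by
  simp [eStar, level]

theorem sum_eStar {M : Type*} [AddCommMonoid M] (n : ℕ) (f : ℕ × ℕ → M) :
    ∑ m ∈ eStar n, f m = ∑ j ∈ Icc 1 n, ∑ t ∈ range (j + 1), f (j - t, t) := by
  rw [eStar, sum_biUnion fun j _ j' _ hne => disjoint_left.2 fun p hp hp' =>
    hne ((mem_antidiagonal.1 hp).symm.trans (mem_antidiagonal.1 hp'))]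
  refine sum_congr rfl fun j _ => ?_
  rw [← Nat.sum_antidiagonal_swap, Nat.sum_antidiagonal_eq_sum_range_succ_mk]
  rfl

open scoped Classical in
noncomputable def chains (n k : ℕ) (s : ℤ) : Finset (Finset (ℕ × ℕ)) :=
  (eStar n).powersetCard k |>.filter fun S =>
    IsChain (· ≤ ·) (S : Set (ℕ × ℕ)) ∧ ∀ p ∈ S, signature p ≤ s

theorem mem_chains {n k : ℕ} {s : ℤ} {S : Finset (ℕ × ℕ)} :
    S ∈ chains n k s ↔ S ⊆ eStar n ∧ #S = k ∧ IsChain (· ≤ ·) (S : Set (ℕ × ℕ)) ∧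
      ∀ p ∈ S, signature p ≤ s := by
  simp only [chains, mem_filter, mem_powersetCard, and_assoc]

section Translate

variable {n k : ℕ} {s : ℤ} {m : ℕ × ℕ}

theorem notMem_map_addLeft {n' : ℕ} {T : Finset (ℕ × ℕ)} (hT : T ⊆ eStar n') :
    m ∉ T.map (addLeftEmbedding m) := by
  simp only [mem_map, addLeftEmbedding_apply, add_eq_left, not_exists, not_and]
  exact fun q hq => level_pos_iff.1 (mem_eStar.1 (hT hq)).1

theorem insert_map_addLeft_mem_chains (hm : m ∈ eStar n) (hs : signature m ≤ s)
    {T : Finset (ℕ × ℕ)} (hT : T ∈ chains (n - level m) k (s - signature m)) :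
    insert m (T.map (addLeftEmbedding m)) ∈ chains n (k + 1) s := by
  obtain ⟨hTE, hTk, hTc, hTs⟩ := mem_chains.1 hT
  have hmE := mem_eStar.1 hm
  refine mem_chains.2 ⟨?_, ?_, ?_, ?_⟩
  · intro p hp
    rcases mem_insert.1 hp with rfl | hp
    · exact hm
    obtain ⟨q, hq, rfl⟩ := mem_map.1 hp
    have := mem_eStar.1 (hTE hq)
    rw [mem_eStar, addLeftEmbedding_apply, level_add]
    omega
  · rw [card_insert_of_notMem (notMem_map_addLeft hTE), card_map, hTk]
  · rw [coe_insert, coe_map]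
    refine (hTc.image_of_map_rel _ _ _ fun _ _ h => (add_le_add_iff_left m).2 h).insert ?_
    rintro _ ⟨q, -, rfl⟩ -
    exact Or.inl le_self_add
  · simp only [mem_insert, mem_map, addLeftEmbedding_apply, forall_eq_or_imp,
      forall_exists_index, and_imp, forall_apply_eq_imp_iff₂, signature_add]
    exact ⟨hs, fun q hq => by linarith [hTs q hq]⟩

theorem isLeast_insert_map_addLeft (T : Finset (ℕ × ℕ)) :
    IsLeast (↑(insert m (T.map (addLeftEmbedding m))) : Set (ℕ × ℕ)) m := by
  refine ⟨mem_insert_self m _, fun p hp => ?_⟩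
  rcases mem_insert.1 hp with rfl | hp
  · exact le_rfl
  · obtain ⟨q, -, rfl⟩ := mem_map.1 hp
    exact le_self_add

theorem image_erase_tsub_mem_chains {S : Finset (ℕ × ℕ)} (hS : S ∈ chains n (k + 1) s)
    (hl : IsLeast (S : Set (ℕ × ℕ)) m) :
    (S.erase m).image (· - m) ∈ chains (n - level m) k (s - signature m) := by
  obtain ⟨hSE, hSk, hSc, hSs⟩ := mem_chains.1 hS
  have hsub : ∀ p ∈ S.erase m, ∃ q, q ≠ 0 ∧ p = m + q := fun p hp => by
    obtain ⟨q, rfl⟩ := exists_add_of_le (hl.2 (mem_of_mem_erase hp))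
    exact ⟨q, fun h => ne_of_mem_erase hp (by simp [h]), rfl⟩
  refine mem_chains.2 ⟨?_, ?_, ?_, ?_⟩
  · intro q' hq'
    obtain ⟨p, hp, rfl⟩ := mem_image.1 hq'
    have hpE := mem_eStar.1 (hSE (mem_of_mem_erase hp))
    obtain ⟨q, hq0, rfl⟩ := hsub p hp
    have := level_pos_iff.2 hq0
    rw [level_add] at hpE
    rw [add_tsub_cancel_left, mem_eStar]
    omega
  · rw [card_image_of_injOn, card_erase_of_mem hl.1, hSk, add_tsub_cancel_right]
    intro p hp p' hp' h
    exact (tsub_left_inj (hl.2 (mem_of_mem_erase hp)) (hl.2 (mem_of_mem_erase hp'))).1 h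
  · rw [coe_image]
    exact (hSc.mono (coe_subset.2 (erase_subset m S))).image_of_map_rel _ _ _
      fun _ _ h => tsub_le_tsub_right h m
  · intro q' hq'
    obtain ⟨p, hp, rfl⟩ := mem_image.1 hq'
    have hps := hSs p (mem_of_mem_erase hp)
    obtain ⟨q, -, rfl⟩ := hsub p hp
    rw [signature_add] at hps
    rw [add_tsub_cancel_left]
    linarith

open scoped Classical in
theorem card_filter_isLeast_chains (hm : m ∈ eStar n) (hs : signature m ≤ s) :
    #((chains n (k + 1) s).filter fun S : Finset (ℕ × ℕ) => IsLeast (S : Set (ℕ × ℕ)) m) =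
      #(chains (n - level m) k (s - signature m)) := by
  symm
  refine card_nbij' (fun T => insert m (T.map (addLeftEmbedding m)))
    (fun S => (S.erase m).image (· - m)) (fun T hT => ?_) (fun S hS => ?_)
    (fun T hT => ?_) (fun S hS => ?_)
  · exact mem_filter.2 ⟨insert_map_addLeft_mem_chains hm hs hT, isLeast_insert_map_addLeft T⟩
  · obtain ⟨hS, hl⟩ := mem_filter.1 hS
    exact image_erase_tsub_mem_chains hS hl
  · dsimp only
    rw [erase_insert (notMem_map_addLeft (mem_chains.1 hT).1), map_eq_image, image_image]
    simp [Function.comp_def]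
  · obtain ⟨-, hl⟩ := mem_filter.1 hS
    dsimp only
    rw [map_eq_image, image_image, image_congr (g := id), image_id, insert_erase hl.1]
    exact fun p hp => add_tsub_cancel_of_le (hl.2 (mem_of_mem_erase hp))

end Translate

end EStar

open EStar

theorem chainA_of_neg {n : ℕ} {k s : ℤ} (h : k < 0 ∨ s < 0) : chainA n k s = 0 :=
  if_pos h

theorem chainA_eq_card_chains {n : ℕ} {k s : ℤ} (hk : 0 ≤ k) (hs : 0 ≤ s) :
    chainA n k s = #(chains n k.toNat s) := by
  rw [chainA, if_neg (by omega), ← Nat.card_eq_finsetCard]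
  refine Nat.card_congr (Equiv.subtypeEquivRight fun S => ?_)
  rw [mem_chains, subset_iff]
  simp only [mem_eStar, level, signature]
  tauto

theorem chainA_zero {n : ℕ} {s : ℤ} (hs : 0 ≤ s) : chainA n 0 s = 1 := by
  rw [chainA_eq_card_chains le_rfl hs, card_eq_one]
  refine ⟨∅, eq_singleton_iff_unique_mem.2
    ⟨mem_chains.2 ⟨empty_subset _, rfl, by simp, by simp⟩, fun S hS => ?_⟩⟩
  simpa using (mem_chains.1 hS).2.1

open scoped Classical in
theorem card_filter_isLeast_chains_eq_chainA {n k : ℕ} {s : ℤ} {m : ℕ × ℕ}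
    (hm : m ∈ eStar n) :
    #((chains n (k + 1) s).filter fun S : Finset (ℕ × ℕ) => IsLeast (S : Set (ℕ × ℕ)) m) =
      chainA (n - level m) k (s - signature m) := by
  by_cases hs : signature m ≤ s
  · rw [chainA_eq_card_chains (Int.natCast_nonneg k) (sub_nonneg.2 hs), Int.toNat_natCast]
    exact card_filter_isLeast_chains hm hs
  · rw [chainA_of_neg (Or.inr (by linarith)), card_eq_zero, filter_eq_empty_iff]
    exact fun S hS hl => hs ((mem_chains.1 hS).2.2.2 m hl.1)

theorem card_chains_succ (n k : ℕ) (s : ℤ) :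
    #(chains n (k + 1) s) = ∑ m ∈ eStar n, chainA (n - level m) k (s - signature m) := by
  rw [card_eq_sum_card_isLeast fun S hS => ?_]
  · exact sum_congr rfl fun m hm => card_filter_isLeast_chains_eq_chainA hm
  obtain ⟨hSE, hSk, hSc, -⟩ := mem_chains.1 hS
  obtain ⟨m, hl⟩ := hSc.exists_isLeast (card_pos.1 (by omega))
  exact ⟨m, hSE hl.1, hl⟩

theorem chainA_recursion_general (n : ℕ) (s : ℤ) (hs : 0 ≤ s) (k : ℤ) :
    chainA n k s = (if k = 0 then 1 else 0) +
      ∑ j ∈ Finset.Icc 1 n, ∑ t ∈ Finset.range (j + 1),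
        chainA (n - j) (k - 1) (s + 2 * (t : ℤ) - (j : ℤ)) := by
  rcases lt_or_ge 0 k with hk | hk
  · obtain ⟨k, rfl⟩ : ∃ k' : ℕ, k = k' + 1 := ⟨k.toNat - 1, by omega⟩
    rw [chainA_eq_card_chains hk.le hs, if_neg hk.ne', zero_add,
      show (k + 1 : ℤ).toNat = k + 1 by omega, card_chains_succ, sum_eStar]
    refine sum_congr rfl fun j _ => sum_congr rfl fun t ht => ?_
    have htj : t ≤ j := Nat.lt_succ_iff.1 (mem_range.1 ht)
    simp only [level, signature, Nat.sub_add_cancel htj, Nat.cast_sub htj,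
      add_sub_cancel_right]
    congr 1
    ring
  · have hterm : ∀ n' s', chainA n' (k - 1) s' = 0 :=
      fun _ _ => chainA_of_neg (Or.inl (by omega))
    simp only [hterm, sum_const_zero, add_zero]
    rcases hk.lt_or_eq with hk | rfl
    · rw [chainA_of_neg (Or.inl hk), if_neg hk.ne]
    · rw [chainA_zero hs, if_pos rfl]

/-- For `n ≥ 1` and `s ≥ 0`:
`a(n,k,s) = δ_{k,0} + ∑_{j=1}^{n} ∑_{t=0}^{j} a(n-j, k-1, s+2t-j)`. -/
theorem chainA_recursion (n : ℕ) (hn : 1 ≤ n) (s : ℤ) (hs : 0 ≤ s) (k : ℤ) :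
    chainA n k s = (if k = 0 then 1 else 0) +
      ∑ j ∈ Finset.Icc 1 n, ∑ t ∈ Finset.range (j + 1),
        chainA (n - j) (k - 1) (s + 2 * (t : ℤ) - (j : ℤ)) :=
  chainA_recursion_general n s hs k
end

section
/- Let a(n,k,s) be the number of k-chains in E*_n whose elements all have signature at most s (with a(n,k,s)=0 for s<0). For all n >= 2: a(n,k,0) = a(n-1,k,1) + a(n-1,k-1,1). -/
namespace ChainAux

def P (n m : ℕ) (s : ℤ) (S : Finset (ℕ × ℕ)) : Prop :=
  S.card = m ∧ (∀ p ∈ S, 1 ≤ p.1 + p.2 ∧ p.1 + p.2 ≤ n) ∧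
  IsChain (· ≤ ·) (S : Set (ℕ × ℕ)) ∧ ∀ p ∈ S, (p.1 : ℤ) - (p.2 : ℤ) ≤ s

lemma finP (n m : ℕ) (s : ℤ) : {S | P n m s S}.Finite := by
  apply Set.Finite.subset (Finset.finite_toSet
    ((Finset.range (n+1) ×ˢ Finset.range (n+1)).powerset))
  intro S hS
  rw [Finset.mem_coe, Finset.mem_powerset]
  intro p hp
  have := (hS.2.1 p hp).2
  simp only [Finset.mem_product, Finset.mem_range]
  omega

lemma snd_pos {n m : ℕ} {S : Finset (ℕ × ℕ)} (hS : P n m 0 S) {p : ℕ × ℕ}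
    (hp : p ∈ S) : 1 ≤ p.2 := by
  have h1 := (hS.2.1 p hp).1
  have h2 := hS.2.2.2 p hp
  omega

def φ : ℕ × ℕ → ℕ × ℕ := fun p => (p.1, p.2 - 1)
def ψ : ℕ × ℕ → ℕ × ℕ := fun p => (p.1, p.2 + 1)

lemma ψφ {S : Finset (ℕ × ℕ)} (hb : ∀ p ∈ S, 1 ≤ p.2) : (S.image φ).image ψ = S := by
  rw [Finset.image_image]
  have h : S.image (ψ ∘ φ) = S.image id := by
    apply Finset.image_congr
    intro p hp
    have := hb p (Finset.mem_coe.mp hp)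
    simp only [Function.comp, φ, ψ, id]
    exact Prod.ext rfl (by omega)
  rw [h, Finset.image_id]

lemma φψ (T : Finset (ℕ × ℕ)) : (T.image ψ).image φ = T := by
  rw [Finset.image_image]
  have h : φ ∘ ψ = id := by
    funext p
    simp only [Function.comp, φ, ψ, id]
    rfl
  rw [h, Finset.image_id]

lemma notMem_image_ψ {T : Finset (ℕ × ℕ)} (hT : ∀ p ∈ T, 1 ≤ p.1 + p.2) :
    ((0, 1) : ℕ × ℕ) ∉ T.image ψ := by
  intro h
  obtain ⟨p, hp, he⟩ := Finset.mem_image.mp h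
  have h1 : p.1 = 0 := congrArg Prod.fst he
  have h2 : p.2 + 1 = 1 := congrArg Prod.snd he
  have := hT p hp
  omega

lemma P_image_φ {n m : ℕ} {S : Finset (ℕ × ℕ)} (hS : P n m 0 S)
    (h01 : ((0, 1) : ℕ × ℕ) ∉ S) : P (n - 1) m 1 (S.image φ) := by
  obtain ⟨hcard, hmem, hchain, hsig⟩ := hS
  have hb : ∀ p ∈ S, 1 ≤ p.2 := fun p hp => snd_pos ⟨hcard, hmem, hchain, hsig⟩ hp
  have hsum : ∀ p ∈ S, 2 ≤ p.1 + p.2 := by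
    intro p hp
    have h1 := (hmem p hp).1
    have h2 := hsig p hp
    by_contra h
    have hpe : p = (0, 1) := Prod.ext (by omega) (by omega)
    exact h01 (hpe ▸ hp)
  refine ⟨?_, ?_, ?_, ?_⟩
  · rw [Finset.card_image_of_injOn, hcard]
    intro p hp q hq h
    have hbp := hb p hp
    have hbq := hb q hq
    simp only [φ, Prod.mk.injEq] at h
    exact Prod.ext h.1 (by omega)
  · intro q hq
    obtain ⟨p, hp, rfl⟩ := Finset.mem_image.mp hq
    have h1 := hsum p hp
    have h2 := (hmem p hp).2
    have h3 := hb p hp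
    dsimp only [φ]
    omega
  · intro x hx y hy hxy
    obtain ⟨p, hp, rfl⟩ := Finset.mem_image.mp (Finset.mem_coe.mp hx)
    obtain ⟨q, hq, rfl⟩ := Finset.mem_image.mp (Finset.mem_coe.mp hy)
    have hpq : p ≠ q := fun h => hxy (by rw [h])
    have hbp := hb p hp
    have hbq := hb q hq
    rcases hchain (Finset.mem_coe.mpr hp) (Finset.mem_coe.mpr hq) hpq with h | h
    · exact Or.inl (Prod.mk_le_mk.mpr ⟨h.1, by have := h.2; omega⟩)
    · exact Or.inr (Prod.mk_le_mk.mpr ⟨h.1, by have := h.2; omega⟩)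
  · intro q hq
    obtain ⟨p, hp, rfl⟩ := Finset.mem_image.mp hq
    have h1 := hsig p hp
    have h2 := hb p hp
    dsimp only [φ]
    omega

lemma P_image_ψ {n m : ℕ} {T : Finset (ℕ × ℕ)} (hn : 2 ≤ n) (hT : P (n - 1) m 1 T) :
    P n m 0 (T.image ψ) := by
  obtain ⟨hcard, hmem, hchain, hsig⟩ := hT
  refine ⟨?_, ?_, ?_, ?_⟩
  · rw [Finset.card_image_of_injOn, hcard]
    intro p _ q _ h
    simp only [ψ, Prod.mk.injEq] at h
    exact Prod.ext h.1 (by omega)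
  · intro q hq
    obtain ⟨p, hp, rfl⟩ := Finset.mem_image.mp hq
    have h1 := (hmem p hp).1
    have h2 := (hmem p hp).2
    dsimp only [ψ]
    omega
  · intro x hx y hy hxy
    obtain ⟨p, hp, rfl⟩ := Finset.mem_image.mp (Finset.mem_coe.mp hx)
    obtain ⟨q, hq, rfl⟩ := Finset.mem_image.mp (Finset.mem_coe.mp hy)
    have hpq : p ≠ q := fun h => hxy (by rw [h])
    rcases hchain (Finset.mem_coe.mpr hp) (Finset.mem_coe.mpr hq) hpq with h | h
    · exact Or.inl (Prod.mk_le_mk.mpr ⟨h.1, by have := h.2; omega⟩)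
    · exact Or.inr (Prod.mk_le_mk.mpr ⟨h.1, by have := h.2; omega⟩)
  · intro q hq
    obtain ⟨p, hp, rfl⟩ := Finset.mem_image.mp hq
    have h1 := hsig p hp
    dsimp only [ψ]
    push_cast
    omega

lemma P_erase {n m : ℕ} {S : Finset (ℕ × ℕ)} (hS : P n (m + 1) 0 S)
    (h : ((0, 1) : ℕ × ℕ) ∈ S) : P n m 0 (S.erase (0, 1)) := by
  obtain ⟨hcard, hmem, hchain, hsig⟩ := hS
  refine ⟨?_, fun p hp => hmem p (Finset.mem_of_mem_erase hp), ?_,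
    fun p hp => hsig p (Finset.mem_of_mem_erase hp)⟩
  · rw [Finset.card_erase_of_mem h, hcard]
    omega
  · exact hchain.mono (Finset.coe_subset.mpr (Finset.erase_subset _ _))

lemma P_insert {n m : ℕ} {T : Finset (ℕ × ℕ)} (hn : 2 ≤ n) (hT : P (n - 1) m 1 T) :
    P n (m + 1) 0 (insert (0, 1) (T.image ψ)) := by
  have h01 : ((0, 1) : ℕ × ℕ) ∉ T.image ψ :=
    notMem_image_ψ (fun p hp => (hT.2.1 p hp).1)
  obtain ⟨hcard, hmem, hchain, hsig⟩ := P_image_ψ hn hT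
  refine ⟨?_, ?_, ?_, ?_⟩
  · rw [Finset.card_insert_of_notMem h01, hcard]
  · intro p hp
    rcases Finset.mem_insert.mp hp with rfl | hp
    · simp; omega
    · exact hmem p hp
  · rw [Finset.coe_insert]
    apply hchain.insert
    intro q hq _
    left
    obtain ⟨p, hp, rfl⟩ := Finset.mem_image.mp (Finset.mem_coe.mp hq)
    exact Prod.mk_le_mk.mpr ⟨Nat.zero_le _, by simp [ψ]⟩
  · intro p hp
    rcases Finset.mem_insert.mp hp with rfl | hp
    · norm_num
    · exact hsig p hp

def e1 (n m : ℕ) (hn : 2 ≤ n) :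
    {S : Finset (ℕ × ℕ) // P n m 0 S ∧ ((0, 1) : ℕ × ℕ) ∉ S} ≃
    {T : Finset (ℕ × ℕ) // P (n - 1) m 1 T} where
  toFun S := ⟨S.1.image φ, P_image_φ S.2.1 S.2.2⟩
  invFun T := ⟨T.1.image ψ, P_image_ψ hn T.2,
    notMem_image_ψ (fun p hp => (T.2.2.1 p hp).1)⟩
  left_inv S := Subtype.ext (ψφ (fun p hp => snd_pos S.2.1 hp))
  right_inv T := Subtype.ext (φψ T.1)

def e2 (n m : ℕ) (hn : 2 ≤ n) :
    {S : Finset (ℕ × ℕ) // P n (m + 1) 0 S ∧ ((0, 1) : ℕ × ℕ) ∈ S} ≃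
    {T : Finset (ℕ × ℕ) // P (n - 1) m 1 T} where
  toFun S := ⟨(S.1.erase (0, 1)).image φ,
    P_image_φ (P_erase S.2.1 S.2.2) (Finset.notMem_erase _ _)⟩
  invFun T := ⟨insert (0, 1) (T.1.image ψ), P_insert hn T.2, Finset.mem_insert_self _ _⟩
  left_inv S := Subtype.ext (by
    show insert (0, 1) (((S.1.erase (0, 1)).image φ).image ψ) = S.1
    rw [ψφ (fun p hp => snd_pos S.2.1 (Finset.mem_of_mem_erase hp)),
      Finset.insert_erase S.2.2])
  right_inv T := Subtype.ext (by
    show ((insert (0, 1) (T.1.image ψ)).erase (0, 1)).image φ = T.1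
    rw [Finset.erase_insert (notMem_image_ψ (fun p hp => (T.2.2.1 p hp).1)), φψ])

lemma card_split {α : Type*} (p q : α → Prop) (h : {x | p x}.Finite) :
    Nat.card {x // p x} =
      Nat.card {x // p x ∧ q x} + Nat.card {x // p x ∧ ¬ q x} := by
  classical
  haveI : Finite {x // p x ∧ q x} := (h.subset (fun x hx => hx.1)).to_subtype
  haveI : Finite {x // p x ∧ ¬ q x} := (h.subset (fun x hx => hx.1)).to_subtype
  have e : {x // p x} ≃ {x // p x ∧ q x} ⊕ {x // p x ∧ ¬ q x} :=
    { toFun := fun x => if hq : q x.1 then Sum.inl ⟨x.1, x.2, hq⟩ else Sum.inr ⟨x.1, x.2, hq⟩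
      invFun := fun y => y.elim (fun a => ⟨a.1, a.2.1⟩) (fun a => ⟨a.1, a.2.1⟩)
      left_inv := fun x => by by_cases hq : q x.1 <;> simp [hq]
      right_inv := fun y => by
        rcases y with ⟨a, ha, hq⟩ | ⟨a, ha, hq⟩ <;> simp [hq] }
  rw [Nat.card_congr e, Nat.card_sum]

end ChainAux

open ChainAux in
/-- For `n ≥ 2`: `a(n,k,0) = a(n-1,k,1) + a(n-1,k-1,1)`. -/
theorem chainA_zero_recursion (n : ℕ) (hn : 2 ≤ n) (k : ℤ) :
    chainA n k 0 = chainA (n - 1) k 1 + chainA (n - 1) (k - 1) 1 := by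
  by_cases hk : k < 0
  · have hk1 : k - 1 < 0 := by omega
    simp [chainA, hk, hk1]
  · push_neg at hk
    have h0 : chainA n k 0 = Nat.card {S // P n k.toNat 0 S} := by
      rw [chainA, if_neg (by omega)]
      rfl
    have h1 : chainA (n - 1) k 1 = Nat.card {S // P (n - 1) k.toNat 1 S} := by
      rw [chainA, if_neg (by omega)]
      rfl
    have hnotcard : Nat.card {S // P n k.toNat 0 S ∧ ((0, 1) : ℕ × ℕ) ∉ S} =
        chainA (n - 1) k 1 := by
      rw [Nat.card_congr (e1 n k.toNat hn), h1]
    have hmemcard : Nat.card {S // P n k.toNat 0 S ∧ ((0, 1) : ℕ × ℕ) ∈ S} =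
        chainA (n - 1) (k - 1) 1 := by
      by_cases hk0 : k = 0
      · subst hk0
        have he : IsEmpty {S // P n (0 : ℤ).toNat 0 S ∧ ((0, 1) : ℕ × ℕ) ∈ S} := by
          constructor
          rintro ⟨S, hS, h01⟩
          have hS0 : S = ∅ := Finset.card_eq_zero.mp hS.1
          rw [hS0] at h01
          simp at h01
        rw [Nat.card_of_isEmpty]
        simp [chainA]
      · have hk1 : 1 ≤ k := by omega
        obtain ⟨m, hm⟩ : ∃ m : ℕ, k.toNat = m + 1 := ⟨(k - 1).toNat, by omega⟩
        have hm' : (k - 1).toNat = m := by omega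
        rw [hm]
        rw [Nat.card_congr (e2 n m hn)]
        rw [chainA, if_neg (by omega), hm']
        rfl
    rw [h0, card_split (P n k.toNat 0) (fun S => ((0, 1) : ℕ × ℕ) ∈ S) (finP n k.toNat 0),
      hmemcard, hnotcard]
    omega
end

section
/- Let g(n,k) be the number of k-element chains in E*_n. For all n >= 3 and all k: g(n,k) = 2*g(n-1,k) - g(n-2,k) + 2*g(n-1,k-1) - g(n-2,k-1). -/
/-- `chainG n k` is the number of `k`-element chains in `E*_n = {(a,b) : 1 ≤ a+b ≤ n}`;
it is `0` for `k < 0`. -/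
noncomputable def chainG (n : ℕ) (k : ℤ) : ℕ :=
  if k < 0 then 0
  else Nat.card {S : Finset (ℕ × ℕ) // S.card = k.toNat ∧
    (∀ p ∈ S, 1 ≤ p.1 + p.2 ∧ p.1 + p.2 ≤ n) ∧
    IsChain (· ≤ ·) (S : Set (ℕ × ℕ))}


open Finset


/-- Ambient finite set `E*_m`. -/
def Eset (m : ℕ) : Finset (ℕ × ℕ) :=
  ((range (m+1)) ×ˢ (range (m+1))).filter (fun p => 1 ≤ p.1 + p.2 ∧ p.1 + p.2 ≤ m)

/-- The finset of `i`-element chains of `E*_m`. -/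
noncomputable def CHs (m i : ℕ) : Finset (Finset (ℕ × ℕ)) :=
  @Finset.filter _ (fun S => IsChain (· ≤ ·) (S : Set (ℕ × ℕ))) (Classical.decPred _)
    ((Eset m).powersetCard i)

lemma mem_Eset {m : ℕ} {p : ℕ × ℕ} :
    p ∈ Eset m ↔ 1 ≤ p.1 + p.2 ∧ p.1 + p.2 ≤ m := by
  simp only [Eset, mem_filter, mem_product, mem_range]
  omega

lemma mem_CHs {m i : ℕ} {S : Finset (ℕ × ℕ)} :
    S ∈ CHs m i ↔ S.card = i ∧ (∀ p ∈ S, 1 ≤ p.1 + p.2 ∧ p.1 + p.2 ≤ m) ∧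
      IsChain (· ≤ ·) (S : Set (ℕ × ℕ)) := by
  simp only [CHs, mem_filter, mem_powersetCard]
  constructor
  · rintro ⟨⟨hsub, hcard⟩, hch⟩
    exact ⟨hcard, fun p hp => mem_Eset.1 (hsub hp), hch⟩
  · rintro ⟨hcard, hb, hch⟩
    exact ⟨⟨fun p hp => mem_Eset.2 (hb p hp), hcard⟩, hch⟩

lemma chainG_eq_card (n : ℕ) (k : ℤ) (hk : 0 ≤ k) :
    chainG n k = (CHs n k.toNat).card := by
  rw [chainG, if_neg (not_lt.2 hk)]
  have e : {S : Finset (ℕ × ℕ) // S.card = k.toNat ∧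
      (∀ p ∈ S, 1 ≤ p.1 + p.2 ∧ p.1 + p.2 ≤ n) ∧
      IsChain (· ≤ ·) (S : Set (ℕ × ℕ))} ≃ {S // S ∈ CHs n k.toNat} :=
    Equiv.subtypeEquivRight (fun S => mem_CHs.symm)
  rw [Nat.card_congr e, Nat.card_eq_finsetCard]

noncomputable section

def fsup (R : Finset (ℕ × ℕ)) : ℕ := R.sup Prod.fst
def ssup (R : Finset (ℕ × ℕ)) : ℕ := R.sup Prod.snd

/-- Points on diagonal `m` lying above every point of `R`. -/
def tops (m : ℕ) (R : Finset (ℕ × ℕ)) : Finset (ℕ × ℕ) :=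
  (Finset.Icc (fsup R) (m - ssup R)).image (fun a => (a, m - a))

lemma mem_tops {m : ℕ} {R : Finset (ℕ × ℕ)} (hs : ssup R ≤ m) {p : ℕ × ℕ} :
    p ∈ tops m R ↔ p.1 + p.2 = m ∧ ∀ r ∈ R, r ≤ p := by
  simp only [tops, mem_image, mem_Icc]
  constructor
  · rintro ⟨a, ⟨ha1, ha2⟩, rfl⟩
    refine ⟨by omega, fun r hr => ?_⟩
    have h1 : r.1 ≤ fsup R := le_sup (f := Prod.fst) hr
    have h2 : r.2 ≤ ssup R := le_sup (f := Prod.snd) hr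
    exact ⟨by simpa using by omega, by simpa using by omega⟩
  · rintro ⟨hsum, hle⟩
    have h1 : fsup R ≤ p.1 := Finset.sup_le (fun r hr => (hle r hr).1)
    have h2 : ssup R ≤ p.2 := Finset.sup_le (fun r hr => (hle r hr).2)
    exact ⟨p.1, ⟨h1, by omega⟩, by ext <;> simp <;> omega⟩

lemma card_tops (m : ℕ) (R : Finset (ℕ × ℕ)) :
    (tops m R).card = (m - ssup R) + 1 - fsup R := by
  rw [tops, Finset.card_image_of_injective _ (fun a b h => congrArg Prod.fst h),
    Nat.card_Icc]

lemma ssup_le {m i : ℕ} {R : Finset (ℕ × ℕ)} (hR : R ∈ CHs m i) : ssup R ≤ m :=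
  Finset.sup_le (fun r hr => le_trans (by omega) ((mem_CHs.1 hR).2.1 r hr).2)

lemma fsup_add_ssup_le {m i : ℕ} {R : Finset (ℕ × ℕ)} (hR : R ∈ CHs m i) :
    fsup R + ssup R ≤ m := by
  obtain ⟨hcard, hb, hch⟩ := mem_CHs.1 hR
  rcases R.eq_empty_or_nonempty with rfl | hne
  · simp [fsup, ssup]
  · obtain ⟨r1, hr1, h1⟩ := Finset.exists_mem_eq_sup R hne Prod.fst
    obtain ⟨r2, hr2, h2⟩ := Finset.exists_mem_eq_sup R hne Prod.snd
    rw [fsup, ssup, h1, h2]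
    rcases eq_or_ne r1 r2 with rfl | hne'
    · exact (hb r1 hr1).2
    · rcases hch hr1 hr2 hne' with h | h
      · have := (hb r2 hr2).2
        have := h.1
        omega
      · have := (hb r1 hr1).2
        have := h.2
        omega

/-- The greatest point of a chain containing a diagonal-`m` point. -/
lemma top_of_mem_diag {m i : ℕ} {S : Finset (ℕ × ℕ)} (hS : S ∈ CHs m i)
    {p0 : ℕ × ℕ} (hp0 : p0 ∈ S) (hd : p0.1 + p0.2 = m) : ∀ q ∈ S, q ≤ p0 := by
  obtain ⟨hcard, hb, hch⟩ := mem_CHs.1 hS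
  intro q hq
  rcases eq_or_ne q p0 with rfl | hne
  · exact le_rfl
  · rcases hch hq hp0 hne with h | h
    · exact h
    · have hq2 := (hb q hq).2
      have h1 := h.1
      have h2 := h.2
      exact ⟨by omega, by omega⟩

def pmax (S : Finset (ℕ × ℕ)) : ℕ × ℕ := (fsup S, ssup S)

lemma pmax_eq {S : Finset (ℕ × ℕ)} {p0 : ℕ × ℕ} (hp0 : p0 ∈ S)
    (htop : ∀ q ∈ S, q ≤ p0) : pmax S = p0 := by
  have h1 : fsup S = p0.1 :=
    le_antisymm (Finset.sup_le fun q hq => (htop q hq).1) (le_sup (f := Prod.fst) hp0)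
  have h2 : ssup S = p0.2 :=
    le_antisymm (Finset.sup_le fun q hq => (htop q hq).2) (le_sup (f := Prod.snd) hp0)
  rw [pmax, h1, h2]

/-- Chains containing a point on the top diagonal. -/
def Dset (m i : ℕ) : Finset (Finset (ℕ × ℕ)) :=
  @Finset.filter _ (fun S => ∃ p ∈ S, p.1 + p.2 = m) (Classical.decPred _) (CHs m i)

lemma CHs_split_sum (m i : ℕ) (w : Finset (ℕ × ℕ) → ℕ) :
    ∑ S ∈ CHs (m+1) i, w S = ∑ S ∈ CHs m i, w S + ∑ S ∈ Dset (m+1) i, w S := by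
  classical
  have hfil : (CHs (m+1) i).filter (fun S => ¬ ∃ p ∈ S, p.1 + p.2 = m + 1) = CHs m i := by
    ext S
    simp only [mem_filter, mem_CHs, not_exists, not_and]
    constructor
    · rintro ⟨⟨hcard, hb, hch⟩, hno⟩
      refine ⟨hcard, fun p hp => ?_, hch⟩
      have h1 := hb p hp
      have h2 := hno p hp
      omega
    · rintro ⟨hcard, hb, hch⟩
      exact ⟨⟨hcard, fun p hp => ⟨(hb p hp).1, le_trans (hb p hp).2 (by omega)⟩, hch⟩,
        fun p hp => by have := (hb p hp).2; omega⟩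
  have := Finset.sum_filter_add_sum_filter_not (CHs (m+1) i)
    (fun S => ∃ p ∈ S, p.1 + p.2 = m + 1) w
  rw [← this, hfil]
  have : (CHs (m+1) i).filter (fun S => ∃ p ∈ S, p.1 + p.2 = m + 1) = Dset (m+1) i := by
    rw [Dset]; congr 1
  rw [this, add_comm]

lemma CHs_split (m i : ℕ) :
    (CHs (m+1) i).card = (CHs m i).card + (Dset (m+1) i).card := by
  have h := CHs_split_sum m i (fun _ => 1)
  rw [Finset.card_eq_sum_ones (CHs (m+1) i), Finset.card_eq_sum_ones (CHs m i),
    Finset.card_eq_sum_ones (Dset (m+1) i)]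
  exact h
lemma mem_Dset {m i : ℕ} {S : Finset (ℕ × ℕ)} :
    S ∈ Dset m i ↔ S ∈ CHs m i ∧ ∃ p ∈ S, p.1 + p.2 = m :=
  @Finset.mem_filter _ _ (Classical.decPred _) _ _

lemma Dset_pmax {m i : ℕ} {S : Finset (ℕ × ℕ)} (hS : S ∈ Dset m i) :
    pmax S ∈ S ∧ (pmax S).1 + (pmax S).2 = m ∧ ∀ q ∈ S, q ≤ pmax S := by
  obtain ⟨hS', p0, hp0, hd⟩ := mem_Dset.1 hS
  have htop := top_of_mem_diag hS' hp0 hd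
  rw [pmax_eq hp0 htop]
  exact ⟨hp0, hd, htop⟩

lemma Dset_card (m i : ℕ) :
    (Dset (m+1) (i+1)).card = ∑ R ∈ CHs m i, (tops (m+1) R).card := by
  classical
  rw [← Finset.card_sigma]
  refine Finset.card_bij' (fun S _ => ⟨S.erase (pmax S), pmax S⟩)
    (fun q _ => insert q.2 q.1) ?_ ?_ ?_ ?_
  · intro S hS
    obtain ⟨hmem, hd, htop⟩ := Dset_pmax hS
    have hS' := (mem_Dset.1 hS).1
    obtain ⟨hcard, hb, hch⟩ := mem_CHs.1 hS'
    have herase : S.erase (pmax S) ∈ CHs m i := by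
      refine mem_CHs.2 ⟨?_, ?_, ?_⟩
      · rw [Finset.card_erase_of_mem hmem, hcard]
        omega
      · intro q hq
        obtain ⟨hne, hqS⟩ := Finset.mem_erase.1 hq
        have hb' := hb q hqS
        have hle1 := (htop q hqS).1
        have hle2 := (htop q hqS).2
        refine ⟨hb'.1, ?_⟩
        by_contra hcon
        have hq1 : q.1 + q.2 = m + 1 := by omega
        exact hne (Prod.ext_iff.2 ⟨by omega, by omega⟩)
      · exact IsChain.mono (Finset.coe_subset.2 (Finset.erase_subset _ _)) hch
    refine Finset.mem_sigma.2 ⟨herase, ?_⟩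
    refine (mem_tops (le_trans (ssup_le herase) (by omega))).2 ⟨hd, ?_⟩
    intro r hr
    exact htop r (Finset.mem_of_mem_erase hr)
  · rintro ⟨R, p⟩ hq
    rw [Finset.mem_sigma] at hq
    dsimp only at hq
    obtain ⟨hR, hp⟩ := hq
    obtain ⟨hcard, hb, hch⟩ := mem_CHs.1 hR
    obtain ⟨hd, hge⟩ := (mem_tops (le_trans (ssup_le hR) (by omega))).1 hp
    have hpnot : p ∉ R := fun h => by have := (hb p h).2; omega
    refine mem_Dset.2 ⟨mem_CHs.2 ⟨?_, ?_, ?_⟩, ⟨p, Finset.mem_insert_self _ _, hd⟩⟩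
    · rw [Finset.card_insert_of_notMem hpnot, hcard]
    · intro q hq'
      rcases Finset.mem_insert.1 hq' with rfl | hq'
      · omega
      · have := hb q hq'
        exact ⟨this.1, by omega⟩
    · rw [Finset.coe_insert]
      exact hch.insert (fun b hb' _ => Or.inr (hge b hb'))
  · intro S hS
    exact Finset.insert_erase (Dset_pmax hS).1
  · rintro ⟨R, p⟩ hq
    rw [Finset.mem_sigma] at hq
    dsimp only at hq
    obtain ⟨hR, hp⟩ := hq
    obtain ⟨hcard, hb, hch⟩ := mem_CHs.1 hR
    obtain ⟨hd, hge⟩ := (mem_tops (le_trans (ssup_le hR) (by omega))).1 hp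
    have hpnot : p ∉ R := fun h => by have := (hb p h).2; omega
    have htop' : ∀ x ∈ insert p R, x ≤ p := by
      intro x hx
      rcases Finset.mem_insert.1 hx with rfl | hx
      · exact le_rfl
      · exact hge x hx
    have hpm : pmax (insert p R) = p := pmax_eq (Finset.mem_insert_self _ _) htop'
    simp only [hpm, Finset.erase_insert hpnot]

lemma tops_succ {m i : ℕ} {R : Finset (ℕ × ℕ)} (hR : R ∈ CHs m i) :
    (tops (m+1) R).card = (tops m R).card + 1 := by
  have := fsup_add_ssup_le hR
  rw [card_tops, card_tops]
  omega

lemma tops_card_one {m i : ℕ} {R : Finset (ℕ × ℕ)} (hR : R ∈ Dset m i) :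
    (tops m R).card = 1 := by
  have h1 := fsup_add_ssup_le (mem_Dset.1 hR).1
  obtain ⟨p, hp, hd⟩ := (mem_Dset.1 hR).2
  have h2 : p.1 ≤ fsup R := le_sup (f := Prod.fst) hp
  have h3 : p.2 ≤ ssup R := le_sup (f := Prod.snd) hp
  rw [card_tops]
  omega

lemma CHs_zero (m : ℕ) : CHs m 0 = {∅} := by
  ext S
  simp only [mem_CHs, Finset.card_eq_zero, Finset.mem_singleton]
  constructor
  · rintro ⟨rfl, -, -⟩; rfl
  · rintro rfl
    exact ⟨rfl, by simp, by simp [IsChain, Set.Pairwise]⟩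

lemma key (m i : ℕ) :
    (CHs (m+2) (i+1)).card + (CHs m (i+1)).card + (CHs m i).card
      = 2 * (CHs (m+1) (i+1)).card + 2 * (CHs (m+1) i).card := by
  have e1 : (CHs (m+2) (i+1)).card = (CHs (m+1) (i+1)).card + (Dset (m+2) (i+1)).card :=
    CHs_split (m+1) (i+1)
  have e2 := CHs_split m (i+1)
  have e3 := CHs_split m i
  have e4 : (Dset (m+2) (i+1)).card = ∑ R ∈ CHs (m+1) i, (tops (m+2) R).card :=
    Dset_card (m+1) i
  have e5 := Dset_card m i
  have e6 : ∑ R ∈ CHs (m+1) i, (tops (m+2) R).card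
      = (∑ R ∈ CHs (m+1) i, (tops (m+1) R).card) + (CHs (m+1) i).card := by
    rw [Finset.card_eq_sum_ones (CHs (m+1) i), ← Finset.sum_add_distrib]
    exact Finset.sum_congr rfl (fun R hR => tops_succ hR)
  have e7 := CHs_split_sum m i (fun R => (tops (m+1) R).card)
  have e8 : ∑ R ∈ Dset (m+1) i, (tops (m+1) R).card = (Dset (m+1) i).card := by
    rw [Finset.card_eq_sum_ones (Dset (m+1) i)]
    exact Finset.sum_congr rfl (fun R hR => tops_card_one hR)
  omega

end

/-- For `n ≥ 3` and all `k`: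
`g(n,k) = 2 g(n-1,k) - g(n-2,k) + 2 g(n-1,k-1) - g(n-2,k-1)`. -/
theorem chainG_recursion (n : ℕ) (hn : 3 ≤ n) (k : ℤ) :
    (chainG n k : ℤ) =
      2 * chainG (n - 1) k - chainG (n - 2) k
      + 2 * chainG (n - 1) (k - 1) - chainG (n - 2) (k - 1) := by
  rcases lt_trichotomy k 0 with hk | hk | hk
  · have h0 : ∀ m : ℕ, chainG m k = 0 := fun m => by rw [chainG, if_pos hk]
    have h1 : ∀ m : ℕ, chainG m (k - 1) = 0 := fun m => by
      rw [chainG, if_pos (by omega)]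
    rw [h0, h0, h0, h1, h1]
    simp
  · subst hk
    have hc : ∀ m : ℕ, chainG m 0 = 1 := fun m => by
      rw [chainG_eq_card m 0 le_rfl]
      simp [CHs_zero]
    have h1 : ∀ m : ℕ, chainG m (0 - 1) = 0 := fun m => by
      rw [chainG, if_pos (by norm_num)]
    rw [hc, hc, hc, h1, h1]
    norm_num
  · have hk0 : (0:ℤ) ≤ k := le_of_lt hk
    have hk1 : (0:ℤ) ≤ k - 1 := by omega
    rw [chainG_eq_card n k hk0, chainG_eq_card (n-1) k hk0, chainG_eq_card (n-2) k hk0,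
      chainG_eq_card (n-1) (k-1) hk1, chainG_eq_card (n-2) (k-1) hk1]
    have hj : k.toNat = (k-1).toNat + 1 := by omega
    have hkey := key (n-2) ((k-1).toNat)
    have h2 : n - 2 + 2 = n := by omega
    have h1 : n - 2 + 1 = n - 1 := by omega
    rw [h2, h1] at hkey
    rw [hj]
    omega
end
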